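/- Let κ ≥ 0 and let Δ_κ be the rank-one Dunkl Laplacian Δ_κ f(x) = f''(x) + (κ/x²)[f(−x) − f(x) + 2x f'(x)], with carré du champ Γ(f)(x) = f'(x)² + (κ/(2x²))(f(x) − f(−x))² and Γ₂(f) = ½[Δ_κ Γ(f) − 2Γ(Δ_κ f, f)]. Then for every f ∈ C⁴(ℝ) and x ≠ 0: Γ₂(f)(x) = f''(x)² + (κ/x²)[f'(x) + f'(−x) − (f(x) − f(−x))/x]² + (κ/(2x²))[2f'(x) − (f(x) − f(−x))/x]². -/

import Mathlib

/-- The rank-one Dunkl Laplacian. -/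
noncomputable def dunklLap1 (κ : ℝ) (f : ℝ → ℝ) (x : ℝ) : ℝ :=
  deriv (deriv f) x + κ / x ^ 2 * (f (-x) - f x + 2 * x * deriv f x)

/-- The rank-one carré du champ operator (roots normalized so that |α| = √2). -/
noncomputable def dunklGamma1 (κ : ℝ) (f g : ℝ → ℝ) (x : ℝ) : ℝ :=
  deriv f x * deriv g x + κ / (2 * x ^ 2) * (f x - f (-x)) * (g x - g (-x))

/-- The rank-one iterated carré du champ operator
`Γ₂(f) = ½ Δ_κ Γ(f) − Γ(Δ_κ f, f)`. -/
noncomputable def dunklGamma2 (κ : ℝ) (f : ℝ → ℝ) (x : ℝ) : ℝ :=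
  (1 / 2) * dunklLap1 κ (fun y => dunklGamma1 κ f f y) x
    - dunklGamma1 κ (fun y => dunklLap1 κ f y) f x

/-!
Since `x ≠ 0`, the singular coefficients `κ / y ^ 2` are smooth near `x`, so `Δ_κ Γ(f)` and
`Γ(Δ_κ f, f)` at `x` follow from the ordinary product and quotient rules; both only involve
`f`, `f'`, `f''` at `±x` and `f'''(x)`. In `½ Δ_κ Γ(f) − Γ(Δ_κ f, f)` the terms with
`f'''(x)` and `f''(-x)` cancel, and what remains regroups into the three squares.
-/

theorem HasDerivAt.comp_neg {f : ℝ → ℝ} {f' x : ℝ} (hf : HasDerivAt f f' (-x)) :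
    HasDerivAt (fun y => f (-y)) (-f') x := by
  simpa [Function.comp_def] using hf.comp x (hasDerivAt_neg x)

section

variable {f : ℝ → ℝ}

theorem hasDerivAt_sub_comp_neg (hf : Differentiable ℝ f) (x : ℝ) :
    HasDerivAt (fun y => f y - f (-y)) (deriv f x + deriv f (-x)) x :=
  ((hf x).hasDerivAt.sub (hf (-x)).hasDerivAt.comp_neg).congr_deriv (sub_neg_eq_add _ _)

theorem hasDerivAt_add_comp_neg (hf : Differentiable ℝ f) (x : ℝ) :
    HasDerivAt (fun y => f y + f (-y)) (deriv f x - deriv f (-x)) x :=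
  ((hf x).hasDerivAt.add (hf (-x)).hasDerivAt.comp_neg).congr_deriv (sub_eq_add_neg _ _).symm

end

noncomputable def dunklGammaSelfDeriv (κ : ℝ) (f : ℝ → ℝ) (y : ℝ) : ℝ :=
  2 * deriv f y * deriv (deriv f) y
    - κ * (f y - f (-y)) ^ 2 / y ^ 3
    + κ * (f y - f (-y)) * (deriv f y + deriv f (-y)) / y ^ 2

section

variable {f : ℝ → ℝ} {x : ℝ} (κ : ℝ)
  (h₀ : Differentiable ℝ f) (h₁ : Differentiable ℝ (deriv f))
include h₀ h₁

theorem hasDerivAt_dunklGamma1_self (hx : x ≠ 0) :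
    HasDerivAt (dunklGamma1 κ f f) (dunklGammaSelfDeriv κ f x) x := by
  have hq : HasDerivAt (fun y : ℝ => κ / (2 * y ^ 2)) (-κ / x ^ 3) x :=
    ((hasDerivAt_const x κ).div ((hasDerivAt_pow 2 x).const_mul 2) (by positivity)).congr_deriv
      (by field_simp; ring)
  have hu := hasDerivAt_sub_comp_neg h₀ x
  refine (((h₁ x).hasDerivAt.mul (h₁ x).hasDerivAt).add ((hq.mul hu).mul hu)).congr_deriv ?_
  simp only [dunklGammaSelfDeriv, Pi.mul_apply]
  field_simp
  ring

variable (h₂ : Differentiable ℝ (deriv (deriv f)))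
include h₂

theorem hasDerivAt_dunklGammaSelfDeriv (hx : x ≠ 0) :
    HasDerivAt (dunklGammaSelfDeriv κ f)
      (2 * deriv (deriv f) x ^ 2 + 2 * deriv f x * deriv (deriv (deriv f)) x
        + 3 * κ * (f x - f (-x)) ^ 2 / x ^ 4
        - 4 * κ * (f x - f (-x)) * (deriv f x + deriv f (-x)) / x ^ 3
        + κ * (deriv f x + deriv f (-x)) ^ 2 / x ^ 2
        + κ * (f x - f (-x)) * (deriv (deriv f) x - deriv (deriv f) (-x)) / x ^ 2) x := by
  have hu := hasDerivAt_sub_comp_neg h₀ x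
  have hv := hasDerivAt_add_comp_neg h₁ x
  refine ((((h₁ x).hasDerivAt.const_mul 2).mul (h₂ x).hasDerivAt).sub
      (((hu.pow 2).const_mul κ).div (hasDerivAt_pow 3 x) (by positivity)) |>.add
      (((hu.const_mul κ).mul hv).div (hasDerivAt_pow 2 x) (by positivity))).congr_deriv ?_
  simp only [Pi.mul_apply, Pi.pow_apply]
  field_simp
  ring

theorem deriv_deriv_dunklGamma1_self (hx : x ≠ 0) :
    deriv (deriv (dunklGamma1 κ f f)) x
      = 2 * deriv (deriv f) x ^ 2 + 2 * deriv f x * deriv (deriv (deriv f)) x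
        + 3 * κ * (f x - f (-x)) ^ 2 / x ^ 4
        - 4 * κ * (f x - f (-x)) * (deriv f x + deriv f (-x)) / x ^ 3
        + κ * (deriv f x + deriv f (-x)) ^ 2 / x ^ 2
        + κ * (f x - f (-x)) * (deriv (deriv f) x - deriv (deriv f) (-x)) / x ^ 2 := by
  have hev : deriv (dunklGamma1 κ f f) =ᶠ[nhds x] dunklGammaSelfDeriv κ f := by
    filter_upwards [eventually_ne_nhds hx] with y hy
    exact (hasDerivAt_dunklGamma1_self κ h₀ h₁ hy).deriv
  rw [hev.deriv_eq, (hasDerivAt_dunklGammaSelfDeriv κ h₀ h₁ h₂ hx).deriv]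

theorem hasDerivAt_dunklLap1 (hx : x ≠ 0) :
    HasDerivAt (dunklLap1 κ f)
      (deriv (deriv (deriv f)) x
        + κ / x ^ 2 * (deriv f x - deriv f (-x) + 2 * x * deriv (deriv f) x)
        - 2 * κ / x ^ 3 * (f (-x) - f x + 2 * x * deriv f x)) x := by
  have hq : HasDerivAt (fun y : ℝ => κ / y ^ 2) (-2 * κ / x ^ 3) x :=
    ((hasDerivAt_const x κ).div (hasDerivAt_pow 2 x) (by positivity)).congr_deriv
      (by field_simp; ring)
  have hv : HasDerivAt (fun y => f (-y) - f y + 2 * y * deriv f y)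
      (deriv f x - deriv f (-x) + 2 * x * deriv (deriv f) x) x :=
    (((h₀ (-x)).hasDerivAt.comp_neg.sub (h₀ x).hasDerivAt).add
      (((hasDerivAt_id' x).const_mul 2).mul (h₁ x).hasDerivAt)).congr_deriv (by ring)
  refine ((h₂ x).hasDerivAt.add (hq.mul hv)).congr_deriv ?_
  field_simp
  ring

end

theorem dunklGamma2_formula_general (κ : ℝ) (f : ℝ → ℝ)
    (hf : ContDiff ℝ 4 f) (x : ℝ) (hx : x ≠ 0) :
    dunklGamma2 κ f x
      = (deriv (deriv f) x) ^ 2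
        + κ / x ^ 2 * (deriv f x + deriv f (-x) - (f x - f (-x)) / x) ^ 2
        + κ / (2 * x ^ 2) * (2 * deriv f x - (f x - f (-x)) / x) ^ 2 := by
  have h₀ : Differentiable ℝ f := hf.differentiable (by norm_num)
  have h₁ : Differentiable ℝ (deriv f) := (hf.of_le (by norm_num)).differentiable_deriv_two
  have h₂ : Differentiable ℝ (deriv (deriv f)) :=
    (ContDiff.deriv' (n := 2) (hf.of_le (by norm_num))).differentiable_deriv_two
  rw [dunklGamma2, dunklLap1, dunklGamma1.eq_1 κ (fun y => dunklLap1 κ f y),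
    deriv_deriv_dunklGamma1_self κ h₀ h₁ h₂ hx,
    (hasDerivAt_dunklGamma1_self κ h₀ h₁ hx).deriv,
    (hasDerivAt_dunklLap1 κ h₀ h₁ h₂ hx).deriv]
  simp only [dunklGamma1, dunklLap1, dunklGammaSelfDeriv, neg_neg]
  field_simp
  ring

theorem dunklGamma2_formula (κ : ℝ) (hκ : 0 ≤ κ) (f : ℝ → ℝ)
    (hf : ContDiff ℝ 4 f) (x : ℝ) (hx : x ≠ 0) :
    dunklGamma2 κ f x
      = (deriv (deriv f) x) ^ 2
        + κ / x ^ 2 * (deriv f x + deriv f (-x) - (f x - f (-x)) / x) ^ 2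
        + κ / (2 * x ^ 2) * (2 * deriv f x - (f x - f (-x)) / x) ^ 2 :=
  dunklGamma2_formula_general κ f hf x hx
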